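/- arXiv:1602.01021 — 2 statements merged into one kernel-verified Lean document; each statement's English description precedes it below -/
import Mathlib

section
/- The function Ω vanishes exactly at the Fermi points modulo the reciprocal lattice: for every k ∈ ℝ², Ω(k) = 0 if and only if k − k_F^+ ∈ Λ* or k − k_F^− ∈ Λ*, where Λ* = {m₁b₁ + m₂b₂ : m₁, m₂ ∈ ℤ} is the reciprocal lattice generated by b₁ = (2π/3)(1, −√3) and b₂ = (2π/3)(1, √3). -/
open Real Complex

/-- The dot product of two vectors in `ℝ²`. -/
noncomputable def dot (k l : EuclideanSpace ℝ (Fin 2)) : ℝ := k 0 * l 0 + k 1 * l 1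

/-- First basis vector of the triangular lattice. -/
noncomputable def ell1 : EuclideanSpace ℝ (Fin 2) := WithLp.toLp 2 ![3/2, -Real.sqrt 3 / 2]

/-- Second basis vector of the triangular lattice. -/
noncomputable def ell2 : EuclideanSpace ℝ (Fin 2) := WithLp.toLp 2 ![3/2, Real.sqrt 3 / 2]

/-- The function `Ω(k) = 1 + e^{-i k·ℓ₁} + e^{-i k·ℓ₂}`. -/
noncomputable def Omega (k : EuclideanSpace ℝ (Fin 2)) : ℂ :=
  1 + Complex.exp (-Complex.I * (dot k ell1)) + Complex.exp (-Complex.I * (dot k ell2))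

/-- The Fermi point `k_F^+`. -/
noncomputable def kFplus : EuclideanSpace ℝ (Fin 2) := WithLp.toLp 2 ![2 * π / 3, 2 * π / (3 * Real.sqrt 3)]

/-- The Fermi point `k_F^-`. -/
noncomputable def kFminus : EuclideanSpace ℝ (Fin 2) := WithLp.toLp 2 ![2 * π / 3, -(2 * π / (3 * Real.sqrt 3))]

/-- First basis vector of the reciprocal lattice. -/
noncomputable def bb1 : EuclideanSpace ℝ (Fin 2) := WithLp.toLp 2 ((2 * π / 3) • ![1, -Real.sqrt 3])

/-- Second basis vector of the reciprocal lattice. -/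
noncomputable def bb2 : EuclideanSpace ℝ (Fin 2) := WithLp.toLp 2 ((2 * π / 3) • ![1, Real.sqrt 3])

/-- The reciprocal lattice `Λ* = {m₁ b₁ + m₂ b₂ : m₁, m₂ ∈ ℤ}`. -/
noncomputable def recipLattice : Set (EuclideanSpace ℝ (Fin 2)) :=
  { x | ∃ m₁ m₂ : ℤ, x = m₁ • bb1 + m₂ • bb2 }

/-! Writing `u = k·ℓ₁`, `v = k·ℓ₂`, the equation `1 + e^{-iu} + e^{-iv} = 0` splits into
`1 + cos u + cos v = 0` and `sin u + sin v = 0`; with `sin² + cos² = 1` this forces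
`cos u = -1/2` and `v ≡ -u`, i.e. `(u, v) ≡ ±(2π/3, -2π/3) mod 2π`. Since `bᵢ·ℓⱼ = 2π δᵢⱼ`, a point
is determined modulo `Λ*` by its two phases `k·ℓⱼ mod 2π`, and `k_F^±` are exactly the points with
these two phase pairs. -/

open Real.Angle in
theorem one_add_cos_add_cos_eq_zero_and_sin_add_sin_eq_zero_iff (u v : ℝ) :
    (1 + Real.cos u + Real.cos v = 0 ∧ Real.sin u + Real.sin v = 0) ↔
      ((u : Angle) = ↑(2 * π / 3) ∨ (u : Angle) = -↑(2 * π / 3)) ∧ (v : Angle) = -u := by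
  have cos_two_pi_div_three : Real.cos (2 * π / 3) = -(1 / 2) := by
    rw [show 2 * π / 3 = π - π / 3 by ring, Real.cos_pi_sub, Real.cos_pi_div_three]
  rw [← cos_eq_iff_coe_eq_or_eq_neg, cos_two_pi_div_three, ← coe_neg]
  constructor
  · rintro ⟨hcos, hsin⟩
    have pythagoras_v := Real.sin_sq_add_cos_sq v
    rw [show Real.sin v = -Real.sin u by linarith, show Real.cos v = -1 - Real.cos u by linarith]
      at pythagoras_v
    have hu : Real.cos u = -(1 / 2) := by
      linear_combination (1 / 2) * pythagoras_v - (1 / 2) * Real.sin_sq_add_cos_sq u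
    refine ⟨hu, cos_sin_inj ?_ ?_⟩
    · rw [Real.cos_neg]; linarith
    · rw [Real.sin_neg]; linarith
  · rintro ⟨hu, hv⟩
    have hcos := congrArg Real.Angle.cos hv
    have hsin := congrArg Real.Angle.sin hv
    simp only [cos_coe, sin_coe, Real.cos_neg, Real.sin_neg] at hcos hsin
    constructor <;> linarith

theorem one_add_exp_add_exp_eq_zero_iff (u v : ℝ) :
    1 + Complex.exp (-Complex.I * u) + Complex.exp (-Complex.I * v) = 0 ↔
      ((u : Angle) = ↑(2 * π / 3) ∨ (u : Angle) = -↑(2 * π / 3)) ∧ (v : Angle) = -u := by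
  rw [← one_add_cos_add_cos_eq_zero_and_sin_add_sin_eq_zero_iff, Complex.ext_iff]
  simp only [neg_mul, Complex.add_re, Complex.one_re, Complex.exp_re, Complex.neg_re,
    Complex.mul_re, Complex.I_re, Complex.ofReal_re, zero_mul, Complex.I_im, Complex.ofReal_im,
    mul_zero, sub_self, neg_zero, Real.exp_zero, Complex.neg_im, Complex.mul_im, one_mul, zero_add,
    Real.cos_neg, Complex.zero_re, Complex.add_im, Complex.one_im, Complex.exp_im, Real.sin_neg,
    mul_neg, Complex.zero_im]
  rw [← neg_add, neg_eq_zero]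

theorem dot_sub_left (k q l : EuclideanSpace ℝ (Fin 2)) : dot (k - q) l = dot k l - dot q l := by
  simp only [dot, PiLp.sub_apply]
  ring

theorem mem_recipLattice_iff (x : EuclideanSpace ℝ (Fin 2)) :
    x ∈ recipLattice ↔ (dot x ell1 : Angle) = 0 ∧ (dot x ell2 : Angle) = 0 := by
  have h3 : √3 * √3 = 3 := Real.mul_self_sqrt (by norm_num)
  simp only [Real.Angle.coe_eq_zero_iff, zsmul_eq_mul]
  constructor
  · rintro ⟨m₁, m₂, rfl⟩
    refine ⟨⟨m₁, ?_⟩, ⟨m₂, ?_⟩⟩ <;>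
      simp only [dot, bb1, bb2, ell1, ell2, PiLp.add_apply, PiLp.smul_apply, Pi.smul_apply,
        zsmul_eq_mul, smul_eq_mul, Matrix.cons_val_zero, Matrix.cons_val_one,
        Matrix.cons_val_fin_one]
    · linear_combination (π / 3) * (m₂ - m₁) * h3
    · linear_combination -(π / 3) * (m₂ - m₁) * h3
  · rintro ⟨⟨m₁, h₁⟩, ⟨m₂, h₂⟩⟩
    refine ⟨m₁, m₂, ?_⟩
    ext i
    fin_cases i <;>
      simp only [dot, bb1, bb2, ell1, ell2, PiLp.add_apply, PiLp.smul_apply, Pi.smul_apply,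
        zsmul_eq_mul, smul_eq_mul, Fin.zero_eta, Fin.mk_one, Matrix.cons_val_zero,
        Matrix.cons_val_one, Matrix.cons_val_fin_one] at h₁ h₂ ⊢
    · linear_combination (-1 / 3) * (h₁ + h₂)
    · linear_combination (-√3 / 3) * (h₂ - h₁) - (x 1 / 3) * h3

theorem dot_kFplus_ell1 : dot kFplus ell1 = 2 * π / 3 := by
  have : √3 ≠ 0 := by positivity
  simp only [dot, kFplus, ell1, Matrix.cons_val_zero, Matrix.cons_val_one, Matrix.cons_val_fin_one]
  field_simp
  ring

theorem dot_kFplus_ell2 : dot kFplus ell2 = 4 * π / 3 := by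
  have : √3 ≠ 0 := by positivity
  simp only [dot, kFplus, ell2, Matrix.cons_val_zero, Matrix.cons_val_one, Matrix.cons_val_fin_one]
  field_simp
  ring

theorem dot_kFminus_ell1 : dot kFminus ell1 = 4 * π / 3 := by
  have : √3 ≠ 0 := by positivity
  simp only [dot, kFminus, ell1, Matrix.cons_val_zero, Matrix.cons_val_one, Matrix.cons_val_fin_one]
  field_simp
  ring

theorem dot_kFminus_ell2 : dot kFminus ell2 = 2 * π / 3 := by
  have : √3 ≠ 0 := by positivity
  simp only [dot, kFminus, ell2, Matrix.cons_val_zero, Matrix.cons_val_one, Matrix.cons_val_fin_one]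
  field_simp
  ring

theorem coe_four_pi_div_three : ((4 * π / 3 : ℝ) : Angle) = -↑(2 * π / 3) := by
  rw [show 4 * π / 3 = -(2 * π / 3) + 2 * π by ring, Real.Angle.coe_add, Real.Angle.coe_two_pi,
    add_zero, Real.Angle.coe_neg]

/-- `Ω` vanishes exactly at the Fermi points modulo the reciprocal lattice. -/
theorem omega_zero_iff_fermi_point (k : EuclideanSpace ℝ (Fin 2)) :
    Omega k = 0 ↔ (k - kFplus ∈ recipLattice ∨ k - kFminus ∈ recipLattice) := by
  rw [Omega, one_add_exp_add_exp_eq_zero_iff, mem_recipLattice_iff, mem_recipLattice_iff]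
  simp only [dot_sub_left, Real.Angle.coe_sub, sub_eq_zero, dot_kFplus_ell1, dot_kFplus_ell2,
    dot_kFminus_ell1, dot_kFminus_ell2, coe_four_pi_div_three]
  constructor
  · rintro ⟨h₁ | h₁, h₂⟩ <;> simp_all
  · rintro (⟨h₁, h₂⟩ | ⟨h₁, h₂⟩) <;> simp_all
end

section
/- The function Ω vanishes linearly (and no faster) at the Fermi points: there exists ε > 0 such that for each sign ± and all k' ∈ ℝ² with |k'| ≤ ε one has |k'| ≤ |Ω(k_F^± + k')| ≤ 2|k'|. -/
/-!
The two phases `e^{-i k_F·ℓ₁}`, `e^{-i k_F·ℓ₂}` are the non-real cube roots of unity, so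
`Ω(k_F) = 0` and `Ω(k_F + k')` is its differential at `k_F` up to a Taylor remainder bounded by
`(k'·ℓ₁)² + (k'·ℓ₂)² ≤ (9/2)|k'|²`. At the Fermi points the differential has norm exactly
`(3/2)|k'|`, so for `|k'| ≤ 1/9` the remainder is at most `|k'|/2`.
-/

open Real Complex

/-- The Fermi points `k_F^±`, parametrized by the sign `s = ±1`. -/
noncomputable def kF (s : ℝ) : EuclideanSpace ℝ (Fin 2) :=
  WithLp.toLp 2 ![2 * π / 3, s * (2 * π / (3 * Real.sqrt 3))]

lemma dot_add_left (k k' l : EuclideanSpace ℝ (Fin 2)) : dot (k + k') l = dot k l + dot k' l := by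
  simp only [dot, PiLp.add_apply]; ring

lemma neg_I_mul_ofReal (θ : ℝ) : -I * θ = ((-θ : ℝ) : ℂ) * I := by
  push_cast; ring

lemma exp_neg_I_mul_ofReal (θ : ℝ) : Complex.exp (-I * θ) = Real.cos θ - Real.sin θ * I := by
  rw [neg_I_mul_ofReal, Complex.exp_mul_I, ← ofReal_cos, ← ofReal_sin, Real.cos_neg,
    Real.sin_neg]
  push_cast; ring

lemma norm_exp_neg_I_mul_ofReal (θ : ℝ) : ‖Complex.exp (-I * θ)‖ = 1 := by
  rw [neg_I_mul_ofReal, Complex.norm_exp_ofReal_mul_I]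

lemma norm_exp_neg_I_mul_sub_one_add_le {a : ℝ} (ha : |a| ≤ 1) :
    ‖Complex.exp (-I * a) - 1 + I * a‖ ≤ a ^ 2 := by
  have hz : ‖-I * a‖ = |a| := by simp [Complex.norm_real]
  have h := Complex.norm_exp_sub_one_sub_id_le (hz.le.trans ha)
  rwa [neg_mul, sub_neg_eq_add, ← neg_mul, hz, sq_abs] at h

noncomputable def OmegaDifferential (k k' : EuclideanSpace ℝ (Fin 2)) : ℂ :=
  -I * (Complex.exp (-I * dot k ell1) * dot k' ell1 + Complex.exp (-I * dot k ell2) * dot k' ell2)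

lemma norm_Omega_add_sub_sub_le (k k' : EuclideanSpace ℝ (Fin 2))
    (h₁ : |dot k' ell1| ≤ 1) (h₂ : |dot k' ell2| ≤ 1) :
    ‖Omega (k + k') - Omega k - OmegaDifferential k k'‖ ≤ dot k' ell1 ^ 2 + dot k' ell2 ^ 2 := by
  have hsplit : Omega (k + k') - Omega k - OmegaDifferential k k'
      = Complex.exp (-I * dot k ell1) * (Complex.exp (-I * dot k' ell1) - 1 + I * dot k' ell1)
        + Complex.exp (-I * dot k ell2) * (Complex.exp (-I * dot k' ell2) - 1 + I * dot k' ell2) := by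
    simp only [Omega, OmegaDifferential, dot_add_left, ofReal_add, mul_add, Complex.exp_add]
    ring
  rw [hsplit]
  refine (norm_add_le _ _).trans (add_le_add ?_ ?_) <;>
    rw [norm_mul, norm_exp_neg_I_mul_ofReal, one_mul] <;>
    exact norm_exp_neg_I_mul_sub_one_add_le ‹_›

lemma dot_kF_ell1 (s : ℝ) : dot (kF s) ell1 = π - s * (π / 3) := by
  have : Real.sqrt 3 ≠ 0 := by positivity
  simp only [dot, kF, ell1, PiLp.toLp_apply, Matrix.cons_val_zero, Matrix.cons_val_one]
  field_simp; ring

lemma dot_kF_ell2 (s : ℝ) : dot (kF s) ell2 = s * (π / 3) + π := by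
  have : Real.sqrt 3 ≠ 0 := by positivity
  simp only [dot, kF, ell2, PiLp.toLp_apply, Matrix.cons_val_zero, Matrix.cons_val_one]
  field_simp; ring

lemma cos_sign_mul_pi_div_three {s : ℝ} (hs : s = 1 ∨ s = -1) :
    Real.cos (s * (π / 3)) = 1 / 2 := by
  rcases hs with rfl | rfl <;> simp [Real.cos_pi_div_three]

lemma sin_sign_mul_pi_div_three {s : ℝ} (hs : s = 1 ∨ s = -1) :
    Real.sin (s * (π / 3)) = s * (Real.sqrt 3 / 2) := by
  rcases hs with rfl | rfl <;> simp [Real.sin_pi_div_three]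

lemma exp_neg_I_dot_kF_ell1 {s : ℝ} (hs : s = 1 ∨ s = -1) :
    Complex.exp (-I * dot (kF s) ell1) = -1 / 2 - s * (Real.sqrt 3 / 2) * I := by
  rw [exp_neg_I_mul_ofReal, dot_kF_ell1, Real.cos_pi_sub, Real.sin_pi_sub,
    cos_sign_mul_pi_div_three hs, sin_sign_mul_pi_div_three hs]
  push_cast; ring

lemma exp_neg_I_dot_kF_ell2 {s : ℝ} (hs : s = 1 ∨ s = -1) :
    Complex.exp (-I * dot (kF s) ell2) = -1 / 2 + s * (Real.sqrt 3 / 2) * I := by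
  rw [exp_neg_I_mul_ofReal, dot_kF_ell2, Real.cos_add_pi, Real.sin_add_pi,
    cos_sign_mul_pi_div_three hs, sin_sign_mul_pi_div_three hs]
  push_cast; ring

lemma Omega_kF_eq_zero {s : ℝ} (hs : s = 1 ∨ s = -1) : Omega (kF s) = 0 := by
  rw [Omega, exp_neg_I_dot_kF_ell1 hs, exp_neg_I_dot_kF_ell2 hs]; ring

lemma norm_sq_eq_fin_two (k : EuclideanSpace ℝ (Fin 2)) : ‖k‖ ^ 2 = k 0 ^ 2 + k 1 ^ 2 := by
  simp [EuclideanSpace.real_norm_sq_eq, Fin.sum_univ_two]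

lemma dot_ell1_sq_add_dot_ell2_sq_le (k : EuclideanSpace ℝ (Fin 2)) :
    dot k ell1 ^ 2 + dot k ell2 ^ 2 ≤ 9 / 2 * ‖k‖ ^ 2 := by
  have h3 : Real.sqrt 3 ^ 2 = 3 := Real.sq_sqrt (by norm_num)
  simp only [norm_sq_eq_fin_two, dot, ell1, ell2, PiLp.toLp_apply, Matrix.cons_val_zero,
    Matrix.cons_val_one]
  nlinarith [sq_nonneg (k 1)]

lemma norm_OmegaDifferential_kF {s : ℝ} (hs : s = 1 ∨ s = -1) (k : EuclideanSpace ℝ (Fin 2)) :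
    ‖OmegaDifferential (kF s) k‖ = 3 / 2 * ‖k‖ := by
  have h3 : Real.sqrt 3 ^ 2 = 3 := Real.sq_sqrt (by norm_num)
  have hs2 : s ^ 2 = 1 := by rcases hs with rfl | rfl <;> norm_num
  have hL : (-1 / 2 - s * (Real.sqrt 3 / 2) * I) * dot k ell1
      + (-1 / 2 + s * (Real.sqrt 3 / 2) * I) * dot k ell2
      = ((-3 / 2 * k 0 : ℝ) : ℂ) + ((3 / 2 * s * k 1 : ℝ) : ℂ) * I := by
    simp only [dot, ell1, ell2, PiLp.toLp_apply, Matrix.cons_val_zero, Matrix.cons_val_one]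
    push_cast
    linear_combination (s * k 1 / 2 * I) * (by exact_mod_cast h3 : (Real.sqrt 3 : ℂ) ^ 2 = 3)
  rw [OmegaDifferential, exp_neg_I_dot_kF_ell1 hs, exp_neg_I_dot_kF_ell2 hs, norm_mul,
    norm_neg, Complex.norm_I, one_mul, hL, Complex.norm_add_mul_I,
    show (-3 / 2 * k 0) ^ 2 + (3 / 2 * s * k 1) ^ 2 = (3 / 2 * ‖k‖) ^ 2 by
      rw [mul_pow _ ‖k‖, norm_sq_eq_fin_two]; linear_combination (9 / 4 * k 1 ^ 2) * hs2,
    Real.sqrt_sq (by positivity)]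

/-- `Ω` vanishes linearly (and no faster) at the Fermi points: for `|k'| ≤ ε`,
one has `|k'| ≤ |Ω(k_F^± + k')| ≤ 2 |k'|`. -/
theorem omega_linear_vanishing :
    ∃ ε > (0:ℝ), ∀ s : ℝ, (s = 1 ∨ s = -1) →
      ∀ k' : EuclideanSpace ℝ (Fin 2), ‖k'‖ ≤ ε →
        ‖k'‖ ≤ ‖Omega (kF s + k')‖ ∧
        ‖Omega (kF s + k')‖ ≤ 2 * ‖k'‖ := by
  refine ⟨1 / 9, by norm_num, fun s hs k' hk => ?_⟩
  have hsq := dot_ell1_sq_add_dot_ell2_sq_le k'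
  have hquad : 9 / 2 * ‖k'‖ ^ 2 ≤ ‖k'‖ / 2 := by nlinarith [norm_nonneg k']
  have h₁ : |dot k' ell1| ≤ 1 := by
    rw [← sq_le_one_iff_abs_le_one]; nlinarith [sq_nonneg (dot k' ell2)]
  have h₂ : |dot k' ell2| ≤ 1 := by
    rw [← sq_le_one_iff_abs_le_one]; nlinarith [sq_nonneg (dot k' ell1)]
  have htaylor := norm_Omega_add_sub_sub_le (kF s) k' h₁ h₂
  rw [Omega_kF_eq_zero hs, sub_zero] at htaylor
  have hcompare := (abs_norm_sub_norm_le _ _).trans htaylor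
  rw [norm_OmegaDifferential_kF hs] at hcompare
  obtain ⟨hlower, hupper⟩ := abs_le.1 hcompare
  constructor <;> linarith
end
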